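/- Let Γ = (V,E) be a reduced nonbipartite finite simple graph of diameter 2 which contains no triangles. Then Γ² equals the complement graph Γ^C, and consequently Aut^π(Γ) = Aut(Γ) (i.e. Γ is stable). -/

import Mathlib

open SimpleGraph

/-- A graph is reduced (vertex determining) if distinct vertices have distinct
open neighborhoods. -/
def Reduced {V : Type*} (G : SimpleGraph V) : Prop :=
  ∀ u v : V, G.neighborSet u = G.neighborSet v → u = v

/-- The group of two-fold projections of a graph: permutations mapping every
open neighborhood onto some open neighborhood. -/
def autPi {V : Type*} [Fintype V] (G : SimpleGraph V) : Subgroup (Equiv.Perm V) where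
  carrier := {π : Equiv.Perm V | ∀ v : V, ∃ w : V, π '' G.neighborSet v = G.neighborSet w}
  one_mem' := by
    intro v
    exact ⟨v, by simp⟩
  mul_mem' := by
    intro a b ha hb v
    obtain ⟨w, hw⟩ := hb v
    obtain ⟨u, hu⟩ := ha w
    refine ⟨u, ?_⟩
    rw [Equiv.Perm.coe_mul, Set.image_comp, hw, hu]
  inv_mem' := by
    intro a ha v
    have hfin : (Set.range G.neighborSet).Finite := Set.finite_range _
    have hmaps : Set.MapsTo (Set.image ⇑a) (Set.range G.neighborSet)
        (Set.range G.neighborSet) := by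
      rintro s ⟨u, rfl⟩
      obtain ⟨w, hw⟩ := ha u
      exact ⟨w, hw.symm⟩
    have hinj : Set.InjOn (Set.image ⇑a) (Set.range G.neighborSet) :=
      (Set.image_injective.mpr a.injective).injOn
    have hbij := (hfin.injOn_iff_bijOn_of_mapsTo hmaps).mp hinj
    obtain ⟨s, hs, hsv⟩ := hbij.surjOn ⟨v, rfl⟩
    obtain ⟨w, rfl⟩ := hs
    refine ⟨w, ?_⟩
    have : (⇑a⁻¹) '' ((⇑a) '' G.neighborSet w) = G.neighborSet w := by
      rw [← Set.image_comp]
      simp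
    rw [← this, hsv]

/-- The automorphism group of a graph, as a subgroup of the permutations of its vertices. -/
def autG {V : Type*} [Fintype V] (G : SimpleGraph V) : Subgroup (Equiv.Perm V) where
  carrier := {π : Equiv.Perm V | ∀ v w : V, G.Adj (π v) (π w) ↔ G.Adj v w}
  one_mem' := by intro v w; rfl
  mul_mem' := by
    intro a b ha hb v w
    rw [Equiv.Perm.coe_mul, Function.comp_apply, Function.comp_apply, ha, hb]
  inv_mem' := by
    intro a ha v w
    conv_rhs => rw [← (show a (a⁻¹ v) = v from Equiv.apply_symm_apply a v), ← (show a (a⁻¹ w) = w from Equiv.apply_symm_apply a w)]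
    rw [ha]

/-- The square of a graph: distinct vertices are adjacent iff they have a common neighbor. -/
def square {V : Type*} (G : SimpleGraph V) : SimpleGraph V where
  Adj v w := v ≠ w ∧ ∃ u, G.Adj v u ∧ G.Adj u w
  symm := ⟨fun v w h => ⟨h.1.symm, h.2.choose, h.2.choose_spec.2.symm, h.2.choose_spec.1.symm⟩⟩
  loopless := ⟨fun v h => h.1 rfl⟩

/-! In a triangle-free graph two vertices with a common neighbour are not adjacent, and in a graph
of diameter at most 2 two distinct non-adjacent vertices have a common neighbour; together
Γ² = Γᶜ. A two-fold projection π maps the common neighbours of v and w into the neighbourhood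
N(w') with π(N(u)) = N(w'), so π and π⁻¹ preserve adjacency in Γ², hence in Γᶜ, hence in Γ. -/

section

variable {V : Type*} {G : SimpleGraph V}

lemma square_adj_iff {v w : V} :
    (square G).Adj v w ↔ v ≠ w ∧ (G.commonNeighbors v w).Nonempty := by
  simp only [square, Set.Nonempty, mem_commonNeighbors]
  exact and_congr_right fun _ => exists_congr fun _ => and_congr_right fun _ => G.adj_comm _ _

lemma square_le_compl_of_cliqueFree_three (htri : G.CliqueFree 3) : square G ≤ Gᶜ := by
  classical
  rintro v w ⟨hne, u, hvu, huw⟩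
  exact ⟨hne, fun hvw => htri {v, w, u} (is3Clique_triple_iff.mpr ⟨hvw, hvu, huw.symm⟩)⟩

lemma compl_le_square_of_ediam_le_two (hdiam : G.ediam ≤ 2) : Gᶜ ≤ square G := by
  rintro v w ⟨hne, hnadj⟩
  refine square_adj_iff.mpr ⟨hne, Set.nonempty_iff_ne_empty.mpr fun hempty => ?_⟩
  have hfar : 2 < G.edist v w := two_lt_edist_iff.mpr ⟨hne, hnadj, hempty⟩
  exact (edist_le_ediam.trans hdiam).not_gt hfar

lemma square_eq_compl (htri : G.CliqueFree 3) (hdiam : G.ediam ≤ 2) : square G = Gᶜ :=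
  le_antisymm (square_le_compl_of_cliqueFree_three htri) (compl_le_square_of_ediam_le_two hdiam)

lemma square_adj_apply_of_image_neighborSet {π : Equiv.Perm V}
    (hπ : ∀ v : V, ∃ w : V, π '' G.neighborSet v = G.neighborSet w)
    {v w : V} (h : (square G).Adj v w) : (square G).Adj (π v) (π w) := by
  obtain ⟨hne, u, hvu, huw⟩ := h
  obtain ⟨w', hw'⟩ := hπ u
  have hv : π v ∈ G.neighborSet w' := hw' ▸ Set.mem_image_of_mem π hvu.symm
  have hw : π w ∈ G.neighborSet w' := hw' ▸ Set.mem_image_of_mem π huw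
  exact ⟨π.injective.ne hne, w', hv.symm, hw⟩

lemma adj_apply_iff_of_compl_adj_apply_iff (π : Equiv.Perm V)
    (hπ : ∀ v w : V, Gᶜ.Adj (π v) (π w) ↔ Gᶜ.Adj v w) (v w : V) :
    G.Adj (π v) (π w) ↔ G.Adj v w := by
  have hne : π v ≠ π w ↔ v ≠ w := π.injective.ne_iff
  have hcompl := hπ v w
  simp only [compl_adj] at hcompl
  by_cases hvw : v = w
  · subst hvw
    simp
  · tauto

end

section

variable {V : Type*} [Fintype V] {G : SimpleGraph V}

lemma square_adj_apply_iff_of_mem_autPi {π : Equiv.Perm V} (hπ : π ∈ autPi G) (v w : V) :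
    (square G).Adj (π v) (π w) ↔ (square G).Adj v w := by
  refine ⟨fun h => ?_, square_adj_apply_of_image_neighborSet hπ⟩
  simpa using square_adj_apply_of_image_neighborSet ((autPi G).inv_mem hπ) h

lemma autPi_le_autG_of_square_eq_compl (hsq : square G = Gᶜ) : autPi G ≤ autG G := by
  intro π hπ
  refine adj_apply_iff_of_compl_adj_apply_iff π fun v w => ?_
  rw [← hsq]
  exact square_adj_apply_iff_of_mem_autPi hπ v w

lemma autG_le_autPi : autG G ≤ autPi G := by
  intro π hπ v
  refine ⟨π v, Set.ext fun u => ⟨?_, fun hu => ⟨π.symm u, ?_, π.apply_symm_apply u⟩⟩⟩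
  · rintro ⟨x, hx, rfl⟩
    exact (hπ v x).mpr hx
  · have hadj := hπ v (π.symm u)
    rw [π.apply_symm_apply] at hadj
    exact hadj.mp hu

end

theorem stmt_8_general {V : Type*} [Fintype V] (G : SimpleGraph V)
    (hdiam : G.ediam = 2) (htri : G.CliqueFree 3) :
    square G = Gᶜ ∧ autPi G = autG G := by
  have hsq : square G = Gᶜ := square_eq_compl htri hdiam.le
  exact ⟨hsq, le_antisymm (autPi_le_autG_of_square_eq_compl hsq) autG_le_autPi⟩

/-- A reduced, nonbipartite, triangle-free graph of diameter 2 satisfies Γ² = Γᶜ,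
and consequently Aut^π(Γ) = Aut(Γ), i.e. Γ is stable. -/
theorem stmt_8 {V : Type*} [Fintype V] (G : SimpleGraph V) (hred : Reduced G)
    (hnonbip : ∃ (v : V) (p : G.Walk v v), Odd p.length)
    (hdiam : G.ediam = 2) (htri : G.CliqueFree 3) :
    square G = Gᶜ ∧ autPi G = autG G :=
  stmt_8_general G hdiam htri
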